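/- For the fractional Schnakenberg system with spectral fractional Laplacian of order s ∈ (0,1), the critical parameter μ_c = √(d(3-2√2)) is independent of s, while the critical wavenumber is k_c(s) = (√2 - 1)^{1/(2s)}: that is, if D(q;μ) = dq² - (d - μ²)q + μ² denotes the dispersion determinant in the variable q = k^{2s}, then D(q;μ_c) has the double root q = √2 - 1, corresponding to k = (√2-1)^{1/(2s)}. -/
import Mathlib

open Real

/-- For the fractional Schnakenberg system of order `s ∈ (0,1)`, the critical parameter
`μ_c = √(d(3-2√2))` is independent of `s`, while the critical wavenumber is
`k_c(s) = (√2-1)^{1/(2s)}`: the dispersion determinant `D(q;μ) = dq² - (d-μ²)q + μ²`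
in `q = k^{2s}` satisfies `D(q;μ_c) = d(q - (√2-1))²` (double root at `q = √2-1`), and
`k_c(s)^{2s} = √2-1`. -/
theorem fracSchnakenberg_critical (d s : ℝ) (hd : 1 < d) (hs : s ∈ Set.Ioo (0:ℝ) 1) :
    let μc := Real.sqrt (d * (3 - 2 * Real.sqrt 2))
    (∀ q : ℝ, d * q ^ 2 - (d - μc ^ 2) * q + μc ^ 2 = d * (q - (Real.sqrt 2 - 1)) ^ 2) ∧
    ((Real.sqrt 2 - 1) ^ ((1:ℝ) / (2 * s))) ^ (2 * s) = Real.sqrt 2 - 1 := by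
  intro μc
  have h2 : Real.sqrt 2 ^ 2 = 2 := Real.sq_sqrt (by norm_num)
  have h2le : Real.sqrt 2 ≤ 3/2 := by
    nlinarith [Real.sq_sqrt (show (0:ℝ) ≤ 2 by norm_num), Real.sqrt_nonneg 2]
  have hμ : μc ^ 2 = d * (3 - 2 * Real.sqrt 2) := by
    rw [Real.sq_sqrt]
    nlinarith
  constructor
  · intro q
    rw [hμ]; ring_nf; nlinarith [sq_nonneg q]
  · have hx : (0:ℝ) ≤ Real.sqrt 2 - 1 := by
      nlinarith [Real.sq_sqrt (show (0:ℝ) ≤ 2 by norm_num), Real.sqrt_nonneg 2]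
    rw [← Real.rpow_mul hx, one_div, inv_mul_cancel₀ (mul_ne_zero two_ne_zero (ne_of_gt hs.1)),
      Real.rpow_one]
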